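/- For the critical values beta_i = i*alpha/(n+1-i*(1-alpha)), 1 <= i <= n, with step-down boundary tau_SD and sigma = min{beta_i : p_{i:n} > beta_i} ∧ beta_n, the following hold: (i) tau_SD <= sigma; (ii) hat_alpha_n(sigma) = alpha * 1(R(sigma) < n); (iii) sigma is a stopping time with respect to the filtration (F_t^T)_{t in T} of the p-values with time domain T = {0, beta_1, ..., beta_n}. -/

import Mathlib

open MeasureTheory Finset
open scoped Classical

noncomputable section

variable {Ω : Type*}

/-- Number of p-values with index in `I` that are `≤ t` (e.g. false rejections `V`). -/
def Vc {n : ℕ} (p : Fin n → Ω → ℝ) (I : Finset (Fin n)) (t : ℝ) (ω : Ω) : ℕ :=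
  (I.filter fun i => p i ω ≤ t).card

/-- Total number of rejections `R(t)`. -/
def Rc {n : ℕ} (p : Fin n → Ω → ℝ) (t : ℝ) (ω : Ω) : ℕ :=
  (Finset.univ.filter fun i => p i ω ≤ t).card

/-- Critical values `β_i = iα/(n+1-i(1-α))` (note `β_0 = 0`). -/
def beta (n : ℕ) (α : ℝ) (i : ℕ) : ℝ := i * α / (n + 1 - i * (1 - α))

/-- Step-down boundary: `max {crit i : p_{j:n} ≤ crit j for all j ≤ i}`, max ∅ := 0.
(`p_{j:n} ≤ c ↔ R(c) ≥ j`.) -/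
def tauSD {n : ℕ} (p : Fin n → Ω → ℝ) (crit : ℕ → ℝ) (ω : Ω) : ℝ :=
  if h : ((Finset.Icc 1 n).filter fun i =>
      ∀ j ∈ Finset.Icc 1 i, j ≤ Rc p (crit j) ω).Nonempty then
    (((Finset.Icc 1 n).filter fun i =>
      ∀ j ∈ Finset.Icc 1 i, j ≤ Rc p (crit j) ω)).sup' h crit
  else 0

/-- Step-up boundary: `max {crit i : p_{i:n} ≤ crit i}`, max ∅ := 0. -/
def tauSU {n : ℕ} (p : Fin n → Ω → ℝ) (crit : ℕ → ℝ) (ω : Ω) : ℝ :=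
  if h : ((Finset.Icc 1 n).filter fun i => i ≤ Rc p (crit i) ω).Nonempty then
    ((Finset.Icc 1 n).filter fun i => i ≤ Rc p (crit i) ω).sup' h crit
  else 0

/-- FDR estimator `\hat α_n(t)`. -/
def alphaHat {n : ℕ} (p : Fin n → Ω → ℝ) (t : ℝ) (ω : Ω) : ℝ :=
  (t / (1 - t)) * ((1 - (Rc p t ω : ℝ) / n) / ((Rc p t ω : ℝ) / n + 1 / n))

/-- `σ = min {crit i : p_{i:n} > crit i} ∧ crit n` (min ∅ := crit n). -/
def sigmaB {n : ℕ} (p : Fin n → Ω → ℝ) (crit : ℕ → ℝ) (ω : Ω) : ℝ :=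
  min (if h : ((Finset.Icc 1 n).filter fun i => Rc p (crit i) ω < i).Nonempty then
        ((Finset.Icc 1 n).filter fun i => Rc p (crit i) ω < i).inf' h crit
      else crit n) (crit n)

/-- The filtration `F_t^T`, `T = {0, β_1, ..., β_n}` indexed by `k ∈ {0,...,n}`. -/
def Ffilt {n : ℕ} (p : Fin n → Ω → ℝ) (B : ℕ → ℝ) (k : ℕ) : MeasurableSpace Ω :=
  MeasurableSpace.generateFrom {A | ∃ i : Fin n, ∃ j ≤ k, A = {ω | p i ω ≤ B j}}

/-- The martingale-type process `M_J(t) = ∑_{i∈J} (1(p_i ≤ t) - t)/(1-t)` at `t`. -/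
def Mval {n : ℕ} (p : Fin n → Ω → ℝ) (J : Finset (Fin n)) (t : ℝ) (ω : Ω) : ℝ :=
  ∑ i ∈ J, ((if p i ω ≤ t then (1 : ℝ) else 0) - t) / (1 - t)

/-
`σ` is `c m` for the first index `m` at which the step-down procedure with critical values `c`
stops (`m = n` if it never does). Before `m` every `p_{j:n} ≤ c j`, so the step-down boundary
cannot pass `c m`; and for `k < n`, `{σ ≤ c k} = ⋃_{1 ≤ i ≤ k} {p_{i:n} > c i}` is decided by
the indicators up to time `c k`. At a genuine stop `R(c m) = m - 1`, and `β_m` is exactly the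
root of `t/(1-t) · (n + 1 - m)/m = α`; if the procedure never stops, `R(β_n) = n` and both sides
of (ii) vanish.
-/

lemma Rc_mono {n : ℕ} (p : Fin n → Ω → ℝ) {s t : ℝ} (h : s ≤ t) (ω : Ω) :
    Rc p s ω ≤ Rc p t ω :=
  card_le_card (monotone_filter_right _ fun _ _ hi => hi.trans h)

lemma Rc_le {n : ℕ} (p : Fin n → Ω → ℝ) (t : ℝ) (ω : Ω) : Rc p t ω ≤ n := by
  simpa [Rc] using card_filter_le (univ : Finset (Fin n)) _

section FirstExceedance

variable {n : ℕ} (p : Fin n → Ω → ℝ) (c : ℕ → ℝ) (ω : Ω)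

/-- The indices `i` with `p_{i:n} > c i`. -/
def exceedances : Finset ℕ :=
  (Icc 1 n).filter fun i => Rc p (c i) ω < i

def firstExceedance : ℕ :=
  if h : (exceedances p c ω).Nonempty then (exceedances p c ω).min' h else n

variable {p c ω}

lemma firstExceedance_mem (h : (exceedances p c ω).Nonempty) :
    firstExceedance p c ω ∈ exceedances p c ω := by
  rw [firstExceedance, dif_pos h]
  exact min'_mem _ h

lemma firstExceedance_le_of_mem {i : ℕ} (hi : i ∈ exceedances p c ω) :
    firstExceedance p c ω ≤ i := by
  rw [firstExceedance, dif_pos ⟨i, hi⟩]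
  exact min'_le _ _ hi

lemma firstExceedance_of_not_nonempty (h : ¬(exceedances p c ω).Nonempty) :
    firstExceedance p c ω = n :=
  dif_neg h

lemma firstExceedance_le : firstExceedance p c ω ≤ n := by
  by_cases h : (exceedances p c ω).Nonempty
  · exact (mem_Icc.mp (mem_filter.mp (firstExceedance_mem h)).1).2
  · exact (firstExceedance_of_not_nonempty h).le

lemma le_Rc_of_lt_firstExceedance {j : ℕ} (hj1 : 1 ≤ j) (hjm : j < firstExceedance p c ω) :
    j ≤ Rc p (c j) ω := by
  by_contra! hlt
  have hj : j ∈ exceedances p c ω :=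
    mem_filter.mpr ⟨mem_Icc.mpr ⟨hj1, hjm.le.trans firstExceedance_le⟩, hlt⟩
  exact (firstExceedance_le_of_mem hj).not_gt hjm

lemma le_firstExceedance {i : ℕ} (hin : i ≤ n) (hi : ∀ j ∈ Icc 1 i, j ≤ Rc p (c j) ω) :
    i ≤ firstExceedance p c ω := by
  by_cases h : (exceedances p c ω).Nonempty
  · obtain ⟨hm, hRm⟩ := mem_filter.mp (firstExceedance_mem h)
    by_contra! him
    exact (hi _ (mem_Icc.mpr ⟨(mem_Icc.mp hm).1, him.le⟩)).not_gt hRm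
  · rw [firstExceedance_of_not_nonempty h]
    exact hin

lemma firstExceedance_le_iff {k : ℕ} (hk : k < n) :
    firstExceedance p c ω ≤ k ↔ ∃ i ∈ Icc 1 k, Rc p (c i) ω < i := by
  constructor
  · intro hmk
    by_cases h : (exceedances p c ω).Nonempty
    · obtain ⟨hm, hRm⟩ := mem_filter.mp (firstExceedance_mem h)
      exact ⟨_, mem_Icc.mpr ⟨(mem_Icc.mp hm).1, hmk⟩, hRm⟩
    · rw [firstExceedance_of_not_nonempty h] at hmk
      omega
  · rintro ⟨i, hi, hRi⟩
    have hi' : i ∈ exceedances p c ω :=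
      mem_filter.mpr ⟨mem_Icc.mpr ⟨(mem_Icc.mp hi).1, (mem_Icc.mp hi).2.trans hk.le⟩, hRi⟩
    exact (firstExceedance_le_of_mem hi').trans (mem_Icc.mp hi).2

lemma Rc_firstExceedance_of_nonempty (hc : MonotoneOn c (Set.Iic n))
    (h : (exceedances p c ω).Nonempty) :
    Rc p (c (firstExceedance p c ω)) ω = firstExceedance p c ω - 1 := by
  obtain ⟨hm, hRm⟩ := mem_filter.mp (firstExceedance_mem h)
  set m := firstExceedance p c ω
  obtain ⟨hm1, hmn⟩ := mem_Icc.mp hm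
  suffices m - 1 ≤ Rc p (c m) ω by omega
  rcases hm1.eq_or_lt with hm1 | hm1
  · omega
  calc m - 1 ≤ Rc p (c (m - 1)) ω := le_Rc_of_lt_firstExceedance (by omega) (by omega)
    _ ≤ Rc p (c m) ω :=
      Rc_mono p (hc (Set.mem_Iic.mpr (by omega)) (Set.mem_Iic.mpr hmn) (Nat.sub_le m 1)) ω

lemma Rc_crit_last_of_not_nonempty (h : ¬(exceedances p c ω).Nonempty) : Rc p (c n) ω = n := by
  refine le_antisymm (Rc_le p _ ω) ?_
  rcases Nat.eq_zero_or_pos n with hn | hn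
  · omega
  by_contra! hlt
  exact h ⟨n, mem_filter.mpr ⟨mem_Icc.mpr ⟨hn, le_rfl⟩, hlt⟩⟩

lemma sigmaB_eq_crit_firstExceedance (hc : MonotoneOn c (Set.Iic n)) :
    sigmaB p c ω = c (firstExceedance p c ω) := by
  have hcm : c (firstExceedance p c ω) ≤ c n :=
    hc (Set.mem_Iic.mpr firstExceedance_le) Set.self_mem_Iic firstExceedance_le
  by_cases h : (exceedances p c ω).Nonempty
  · have hinf : (exceedances p c ω).inf' h c = c (firstExceedance p c ω) := by
      refine le_antisymm (inf'_le _ (firstExceedance_mem h)) (le_inf' _ _ fun i hi => ?_)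
      exact hc (Set.mem_Iic.mpr firstExceedance_le)
        (Set.mem_Iic.mpr (mem_Icc.mp (mem_filter.mp hi).1).2) (firstExceedance_le_of_mem hi)
    rw [sigmaB, ← exceedances, dif_pos h, hinf]
    exact min_eq_left hcm
  · rw [sigmaB, ← exceedances, dif_neg h, firstExceedance_of_not_nonempty h, min_self]

lemma tauSD_le_sigmaB (hc : MonotoneOn c (Set.Iic n)) (hc0 : 0 ≤ c 0) :
    tauSD p c ω ≤ sigmaB p c ω := by
  have hcm : ∀ {i}, i ≤ firstExceedance p c ω → c i ≤ c (firstExceedance p c ω) := fun hi =>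
    hc (Set.mem_Iic.mpr (hi.trans firstExceedance_le)) (Set.mem_Iic.mpr firstExceedance_le) hi
  rw [sigmaB_eq_crit_firstExceedance hc]
  unfold tauSD
  split_ifs with hS
  · refine sup'_le _ _ fun i hi => hcm ?_
    simp only [mem_filter] at hi
    exact le_firstExceedance (mem_Icc.mp hi.1).2 hi.2
  · exact hc0.trans (hcm (Nat.zero_le _))

lemma sigmaB_le_crit : sigmaB p c ω ≤ c n :=
  min_le_right _ _

lemma sigmaB_le_crit_iff (hc : StrictMonoOn c (Set.Iic n)) {k : ℕ} (hk : k < n) :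
    sigmaB p c ω ≤ c k ↔ ∃ i ∈ Icc 1 k, Rc p (c i) ω < i := by
  rw [sigmaB_eq_crit_firstExceedance hc.monotoneOn,
    hc.le_iff_le (Set.mem_Iic.mpr firstExceedance_le) (Set.mem_Iic.mpr hk.le),
    firstExceedance_le_iff hk]

end FirstExceedance

lemma measurableSet_Rc_lt {n : ℕ} [MeasurableSpace Ω] (p : Fin n → Ω → ℝ) (B : ℕ → ℝ)
    {j k : ℕ} (hjk : j ≤ k) (i : ℕ) :
    MeasurableSet[Ffilt p B k] {ω | Rc p (B j) ω < i} := by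
  have hRc : (fun ω => Rc p (B j) ω) = fun ω => ∑ a : Fin n, if p a ω ≤ B j then 1 else 0 := by
    funext ω
    rw [Rc, card_filter]
  have hmeas : Measurable[Ffilt p B k] fun ω => Rc p (B j) ω := by
    rw [hRc]
    exact Finset.measurable_sum _ fun a _ => Measurable.ite
      (MeasurableSpace.measurableSet_generateFrom ⟨a, j, hjk, rfl⟩)
      measurable_const measurable_const
  exact hmeas (MeasurableSet.of_discrete (s := {x : ℕ | x < i}))

lemma measurableSet_sigmaB_le {n : ℕ} [MeasurableSpace Ω] (p : Fin n → Ω → ℝ) {c : ℕ → ℝ}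
    (hc : StrictMonoOn c (Set.Iic n)) {k : ℕ} (hk : k ≤ n) :
    MeasurableSet[Ffilt p c k] {ω | sigmaB p c ω ≤ c k} := by
  rcases hk.eq_or_lt with rfl | hk
  · have huniv : {ω | sigmaB p c ω ≤ c k} = Set.univ :=
      Set.eq_univ_of_forall fun _ => sigmaB_le_crit
    rw [huniv]
    exact .univ
  have hset : {ω | sigmaB p c ω ≤ c k} = ⋃ i ∈ Icc 1 k, {ω | Rc p (c i) ω < i} := by
    ext ω
    simp only [Set.mem_iUnion₂, exists_prop]
    exact sigmaB_le_crit_iff (p := p) (ω := ω) hc hk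
  rw [hset]
  exact (Icc 1 k).measurableSet_biUnion fun i hi => measurableSet_Rc_lt p c (mem_Icc.mp hi).2 i

section CriticalValues

variable {n : ℕ} {α : ℝ}

lemma beta_denom_pos (hα : 0 < α) {i : ℕ} (hi : i ≤ n) : 0 < (n : ℝ) + 1 - i * (1 - α) := by
  have hin : (i : ℝ) ≤ n := Nat.cast_le.mpr hi
  nlinarith [Nat.cast_nonneg (α := ℝ) i]

lemma beta_strictMonoOn (hα : 0 < α) : StrictMonoOn (beta n α) (Set.Iic n) := by
  intro i hi j hj hij
  rw [beta, beta, div_lt_div_iff₀ (beta_denom_pos hα hi) (beta_denom_pos hα hj)]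
  have hij' : (i : ℝ) < j := Nat.cast_lt.mpr hij
  nlinarith [mul_pos (mul_pos (sub_pos.mpr hij') hα) (show (0 : ℝ) < n + 1 by positivity)]

lemma alphaHat_beta_of_Rc_eq {n m : ℕ} (p : Fin n → Ω → ℝ) (ω : Ω) (hα : 0 < α)
    (hm1 : 1 ≤ m) (hmn : m ≤ n) (hR : Rc p (beta n α m) ω = m - 1) :
    alphaHat p (beta n α m) ω = α := by
  have hD := (beta_denom_pos hα hmn).ne'
  have hm : (1 : ℝ) ≤ m := by exact_mod_cast hm1
  have hmn' : (m : ℝ) ≤ n := by exact_mod_cast hmn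
  have hn0 : (n : ℝ) ≠ 0 := by linarith
  have hodds : 1 - beta n α m = (n + 1 - m) / (n + 1 - m * (1 - α)) := by
    rw [beta]
    field_simp
    ring
  have hratio : (1 - ((m : ℝ) - 1) / n) / (((m : ℝ) - 1) / n + 1 / n) = (n + 1 - m) / m := by
    rw [← add_div, sub_add_cancel, one_sub_div hn0, div_div_div_cancel_right₀ hn0]
    ring
  have hnm : (n : ℝ) + 1 - m ≠ 0 := by linarith
  have hm0 : (m : ℝ) ≠ 0 := by linarith
  rw [alphaHat, hR, Nat.cast_sub hm1, Nat.cast_one, hratio, hodds, beta]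
  field_simp

end CriticalValues

lemma alphaHat_of_Rc_eq {n : ℕ} (p : Fin n → Ω → ℝ) {t : ℝ} {ω : Ω} (hR : Rc p t ω = n) :
    alphaHat p t ω = 0 := by
  rcases Nat.eq_zero_or_pos n with rfl | hn
  · simp [alphaHat]
  · have hn' : (n : ℝ) ≠ 0 := Nat.cast_ne_zero.mpr hn.ne'
    simp [alphaHat, hR, hn']

theorem sigma_properties_general {n : ℕ} [MeasurableSpace Ω] (p : Fin n → Ω → ℝ) (α : ℝ)
    (hα : α ∈ Set.Ioo (0 : ℝ) 1) :
    (∀ ω : Ω, tauSD p (beta n α) ω ≤ sigmaB p (beta n α) ω)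
    ∧ (∀ ω : Ω, alphaHat p (sigmaB p (beta n α) ω) ω
        = α * (if Rc p (sigmaB p (beta n α) ω) ω < n then 1 else 0))
    ∧ (∀ k : ℕ, k ≤ n →
        MeasurableSet[Ffilt p (beta n α) k] {ω | sigmaB p (beta n α) ω ≤ beta n α k}) := by
  have hβ : StrictMonoOn (beta n α) (Set.Iic n) := beta_strictMonoOn hα.1
  refine ⟨fun ω => tauSD_le_sigmaB hβ.monotoneOn (by simp [beta]), fun ω => ?_,
    fun k hk => measurableSet_sigmaB_le p hβ hk⟩
  rw [sigmaB_eq_crit_firstExceedance hβ.monotoneOn]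
  by_cases h : (exceedances p (beta n α) ω).Nonempty
  · obtain ⟨hm, -⟩ := mem_filter.mp (firstExceedance_mem h)
    obtain ⟨hm1, hmn⟩ := mem_Icc.mp hm
    have hR := Rc_firstExceedance_of_nonempty hβ.monotoneOn h
    rw [hR, if_pos (by omega), mul_one, alphaHat_beta_of_Rc_eq p ω hα.1 hm1 hmn hR]
  · rw [firstExceedance_of_not_nonempty h, alphaHat_of_Rc_eq p (Rc_crit_last_of_not_nonempty h),
      Rc_crit_last_of_not_nonempty h, if_neg (lt_irrefl n), mul_zero]

/-- (i) `τ_SD ≤ σ`; (ii) `\hatα_n(σ) = α·1(R(σ) < n)`;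
(iii) `σ` is a stopping time w.r.t. the filtration `(F_t^T)_{t∈T}`, `T = {0,β_1,...,β_n}`. -/
theorem sigma_properties {n : ℕ} [MeasurableSpace Ω] (p : Fin n → Ω → ℝ) (α : ℝ)
    (hn : 1 ≤ n) (hα : α ∈ Set.Ioo (0 : ℝ) 1)
    (hp01 : ∀ i ω, p i ω ∈ Set.Icc (0 : ℝ) 1) :
    (∀ ω : Ω, tauSD p (beta n α) ω ≤ sigmaB p (beta n α) ω)
    ∧ (∀ ω : Ω, alphaHat p (sigmaB p (beta n α) ω) ω
        = α * (if Rc p (sigmaB p (beta n α) ω) ω < n then 1 else 0))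
    ∧ (∀ k : ℕ, k ≤ n →
        MeasurableSet[Ffilt p (beta n α) k] {ω | sigmaB p (beta n α) ω ≤ beta n α k}) :=
  sigma_properties_general p α hα

end
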